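/- arXiv:1205.1133 — 2 statements merged into one kernel-verified Lean document; each statement's English description precedes it below -/
import Mathlib

section
/- Let m = diag(σ_1,...,σ_n) with each σ_i ∈ {+1,-1}, and for k ∈ ℂ with Im k > 0 and Re k ≠ 0, define the reflection map B(k): p ↦ (I + ((k-k*)/(k+k*)) p p†/(p† p)) m p on nonzero vectors p ∈ ℂ^n (considered up to scalar). Then B is involutive in the sense B(-k*) B(k) = Id on ℂP^{n-1}: for every nonzero p, B(-k*)(B(k)(p)) is a nonzero scalar multiple of p. -/
open Matrix

/-- The rank-one orthogonal projection `p p† / (p† p)` onto the span of `p`. -/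
noncomputable def proj {n : ℕ} (p : Fin n → ℂ) : Matrix (Fin n) (Fin n) ℂ :=
  (dotProduct (star p) p)⁻¹ • vecMulVec p (star p)

/-- Reflection map `B(k) : p ↦ (I + ((k-k*)/(k+k*)) π(p)) m p`. -/
noncomputable def Bmap {n : ℕ} (m : Matrix (Fin n) (Fin n) ℂ) (k : ℂ)
    (p : Fin n → ℂ) : Fin n → ℂ :=
  ((1 : Matrix (Fin n) (Fin n) ℂ)
    + ((k - starRingEnd ℂ k) / (k + starRingEnd ℂ k)) • proj p).mulVec (m.mulVec p)

lemma vecMulVec_mulVec' {n : ℕ} (a b v : Fin n → ℂ) :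
    (vecMulVec a b).mulVec v = (b ⬝ᵥ v) • a := by
  funext i
  simp only [mulVec, vecMulVec_apply, dotProduct, Pi.smul_apply, smul_eq_mul,
    Finset.sum_mul]
  exact Finset.sum_congr rfl fun j _ => by ring

lemma Bmap_eq {n : ℕ} (m : Matrix (Fin n) (Fin n) ℂ) (k : ℂ) (p : Fin n → ℂ) :
    Bmap m k p = m.mulVec p
      + (((k - starRingEnd ℂ k) / (k + starRingEnd ℂ k))
          * ((star p ⬝ᵥ p)⁻¹ * (star p ⬝ᵥ m.mulVec p))) • p := by
  unfold Bmap proj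
  rw [add_mulVec, one_mulVec, smul_mulVec, smul_mulVec,
    vecMulVec_mulVec', smul_smul, smul_smul]
  module

open scoped ComplexOrder

/-- Involutivity of the reflection map on `ℂPⁿ⁻¹`: for `m = diag(±1)` and `k`
in the upper half plane with `Re k ≠ 0`, `B(-k*)(B(k)(p))` is a nonzero scalar
multiple of `p`. -/
theorem reflection_map_involutive {n : ℕ} (σ : Fin n → ℂ)
    (hσ : ∀ i, σ i = 1 ∨ σ i = -1)
    (k : ℂ) (hIm : 0 < k.im) (hRe : k.re ≠ 0)
    (p : Fin n → ℂ) (hp : p ≠ 0) :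
    ∃ c : ℂ, c ≠ 0 ∧
      Bmap (diagonal σ) (-(starRingEnd ℂ k)) (Bmap (diagonal σ) k p) = c • p := by
  classical
  have hσreal : ∀ i, star (σ i) = σ i := by
    intro i; rcases hσ i with h | h <;> simp [h]
  -- diag(σ) squares to the identity and is real symmetric
  have hmm : ∀ v : Fin n → ℂ, (diagonal σ).mulVec ((diagonal σ).mulVec v) = v := by
    intro v; funext i
    simp only [mulVec_diagonal]
    rcases hσ i with h | h <;> simp [h]
  have hstarm : ∀ v : Fin n → ℂ,
      star ((diagonal σ).mulVec v) = (diagonal σ).mulVec (star v) := by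
    intro v; funext i
    simp only [Pi.star_apply, mulVec_diagonal, star_mul', hσreal i]
  have hsymm : ∀ u v : Fin n → ℂ,
      ((diagonal σ).mulVec u) ⬝ᵥ v = u ⬝ᵥ ((diagonal σ).mulVec v) := by
    intro u v
    simp only [dotProduct, mulVec_diagonal]
    exact Finset.sum_congr rfl fun i _ => by ring
  obtain ⟨L, hLdef⟩ : ∃ L : ℂ, L = (k - starRingEnd ℂ k) / (k + starRingEnd ℂ k) :=
    ⟨_, rfl⟩
  obtain ⟨s, hsdef⟩ : ∃ s : ℂ, s = star p ⬝ᵥ p := ⟨_, rfl⟩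
  obtain ⟨t, htdef⟩ : ∃ t : ℂ, t = star p ⬝ᵥ (diagonal σ).mulVec p := ⟨_, rfl⟩
  obtain ⟨β, hβdef⟩ : ∃ β : ℂ, β = L * (s⁻¹ * t) := ⟨_, rfl⟩
  have hss : star s = s := by
    rw [hsdef]
    simp only [dotProduct, star_sum, star_mul', Pi.star_apply, star_star]
    exact Finset.sum_congr rfl fun i _ => by ring
  have hts : star t = t := by
    rw [htdef]
    simp only [dotProduct, mulVec_diagonal, star_sum, star_mul', Pi.star_apply, star_star]
    exact Finset.sum_congr rfl fun i _ => by rw [hσreal i]; ring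
  have hL : star L = -L := by
    rw [hLdef, star_div₀, star_sub, star_add, Complex.star_def, Complex.conj_conj]
    rw [add_comm ((starRingEnd ℂ) k) k, ← neg_sub k ((starRingEnd ℂ) k), neg_div]
  have hβ : star β = -β := by
    rw [hβdef, star_mul', star_mul', star_inv₀, hss, hts, hL]
    ring
  have hβre : β.re = 0 := by
    have h := congrArg Complex.re hβ
    simp only [Complex.star_def, Complex.conj_re, Complex.neg_re] at h
    linarith
  have hc : (1 : ℂ) - β ^ 2 ≠ 0 := by
    intro h
    have h1 := congrArg Complex.re h
    simp only [Complex.sub_re, Complex.one_re, pow_two, Complex.mul_re, hβre,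
      Complex.zero_re] at h1
    nlinarith [sq_nonneg β.im]
  have hs0 : s ≠ 0 := by
    rw [hsdef]
    intro h
    exact hp (dotProduct_star_self_eq_zero.mp h)
  set q := Bmap (diagonal σ) k p with hqdef
  have hq : q = (diagonal σ).mulVec p + β • p := by
    rw [hqdef, Bmap_eq, ← hLdef, ← hsdef, ← htdef, ← hβdef]
  have hmq : (diagonal σ).mulVec q = p + β • (diagonal σ).mulVec p := by
    rw [hq, mulVec_add, mulVec_smul, hmm p]
  have hstarq : star q = (diagonal σ).mulVec (star p) + (-β) • star p := by
    rw [hq, star_add, star_smul, hstarm, hβ]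
  have hsq : star q ⬝ᵥ q = (1 - β ^ 2) * s := by
    rw [hstarq, hq]
    simp only [add_dotProduct, dotProduct_add, smul_dotProduct, dotProduct_smul,
      smul_eq_mul]
    rw [hsymm (star p) ((diagonal σ).mulVec p), hmm p, hsymm (star p) p,
      ← hsdef, ← htdef]
    ring
  have htq : star q ⬝ᵥ (diagonal σ).mulVec q = (1 - β ^ 2) * t := by
    rw [hstarq, hmq]
    simp only [add_dotProduct, dotProduct_add, smul_dotProduct, dotProduct_smul,
      smul_eq_mul]
    rw [hsymm (star p) p, hsymm (star p) ((diagonal σ).mulVec p), hmm p,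
      ← hsdef, ← htdef]
    ring
  refine ⟨1 - β ^ 2, hc, ?_⟩
  rw [Bmap_eq]
  have hL2 : (-(starRingEnd ℂ k) - starRingEnd ℂ (-(starRingEnd ℂ k)))
      / (-(starRingEnd ℂ k) + starRingEnd ℂ (-(starRingEnd ℂ k))) = -L := by
    rw [map_neg, Complex.conj_conj, hLdef]
    rw [show -(starRingEnd ℂ) k - -k = k - (starRingEnd ℂ) k by ring,
      show -(starRingEnd ℂ) k + -k = -(k + (starRingEnd ℂ) k) by ring, div_neg]
  rw [hL2, hsq, htq]
  have hinv : ((1 - β ^ 2) * s)⁻¹ * ((1 - β ^ 2) * t) = s⁻¹ * t := by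
    calc ((1 - β ^ 2) * s)⁻¹ * ((1 - β ^ 2) * t)
        = ((1 - β ^ 2)⁻¹ * (1 - β ^ 2)) * (s⁻¹ * t) := by rw [mul_inv]; ring
      _ = s⁻¹ * t := by rw [inv_mul_cancel₀ hc, one_mul]
  rw [hinv, hmq, hq, show -L * (s⁻¹ * t) = -β by rw [hβdef]; ring]
  module
end

section
/- The norm identity for the collision factor: for unit vectors q1, q2 ∈ ℂ^n and k1, k2 in the open upper half plane with k1 ≠ k2, the vector w = f_2(k1*) (I + (f_2(k1*) - 1) q2 q2†) q1, where f_2(k) = (k - k2)/(k - k2*), has squared norm |w|² = |f_2(k1*)|² (1 + ((k2 - k2*)(k1* - k1)/|k2 - k1|²) |q2† q1|²). -/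
/-!
For a unit vector `q₂`, the rank-one update `1 + (f - 1) q₂ q₂†` multiplies the `q₂`-component of a
vector by `f` and fixes its orthogonal part, so with `f = f₂(k̄₁)` one gets
`|w|² = |f|² (1 + (|f|² - 1) |q₂† q₁|²)`. It remains to compute `|f|² - 1` by clearing denominators.
-/

open Matrix ComplexConjugate

section RankOneUpdate

variable {ι R : Type*} [Fintype ι] [DecidableEq ι] [CommRing R] [StarRing R]

theorem one_add_smul_vecMulVec_mulVec (c : R) (u v : ι → R) :
    (1 + c • vecMulVec u (star u)) *ᵥ v = v + (c * (star u ⬝ᵥ v)) • u := by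
  rw [add_mulVec, one_mulVec, smul_mulVec, vecMulVec_mulVec, op_smul_eq_smul, smul_smul]

theorem star_dotProduct_self_one_add_smul_vecMulVec_mulVec (f : R) {u : ι → R}
    (hu : star u ⬝ᵥ u = 1) (v : ι → R) :
    star ((1 + (f - 1) • vecMulVec u (star u)) *ᵥ v) ⬝ᵥ ((1 + (f - 1) • vecMulVec u (star u)) *ᵥ v)
      = star v ⬝ᵥ v + (star f * f - 1) * (star (star u ⬝ᵥ v) * (star u ⬝ᵥ v)) := by
  have hvu : star v ⬝ᵥ u = star (star u ⬝ᵥ v) := star_dotProduct v u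
  rw [one_add_smul_vecMulVec_mulVec]
  simp only [star_add, star_smul, add_dotProduct, dotProduct_add, smul_dotProduct,
    dotProduct_smul, hu, hvu, star_mul, star_sub, star_one, smul_eq_mul]
  ring

end RankOneUpdate

theorem Complex.sq_norm_conj_sub_div_conj_sub_sub_one {a b : ℂ} (hab : a ≠ b) :
    (‖(conj a - b) / (conj a - conj b)‖ : ℂ) ^ 2 - 1
      = (b - conj b) * (conj a - a) / (‖b - a‖ : ℂ) ^ 2 := by
  have hab' : conj a - conj b ≠ 0 := sub_ne_zero.mpr ((conj : ℂ →+* ℂ).injective.ne hab)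
  have hba' : conj b - conj a ≠ 0 := sub_ne_zero.mpr ((conj : ℂ →+* ℂ).injective.ne hab.symm)
  rw [← Complex.conj_mul', ← Complex.conj_mul']
  simp only [map_div₀, map_sub, Complex.conj_conj]
  field_simp
  ring

theorem collision_factor_norm_general {n : ℕ} (k1 k2 : ℂ)
    (hne : k1 ≠ k2)
    (q1 q2 : Fin n → ℂ)
    (hq1 : dotProduct (star q1) q1 = 1) (hq2 : dotProduct (star q2) q2 = 1) :
    let f2k1s : ℂ := (starRingEnd ℂ k1 - k2) / (starRingEnd ℂ k1 - starRingEnd ℂ k2)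
    let w : Fin n → ℂ := f2k1s •
      (((1 : Matrix (Fin n) (Fin n) ℂ) + (f2k1s - 1) • vecMulVec q2 (star q2)).mulVec q1)
    dotProduct (star w) w
      = ((‖f2k1s‖ : ℂ))^2 *
        (1 + ((k2 - starRingEnd ℂ k2) * (starRingEnd ℂ k1 - k1)
          / ((‖k2 - k1‖ : ℂ))^2)
          * ((‖dotProduct (star q2) q1‖ : ℂ))^2) := by
  intro f w
  have hf : (‖f‖ : ℂ) ^ 2 - 1 = (k2 - conj k2) * (conj k1 - k1) / (‖k2 - k1‖ : ℂ) ^ 2 :=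
    Complex.sq_norm_conj_sub_div_conj_sub_sub_one hne
  simp only [w, star_smul, smul_dotProduct, dotProduct_smul,
    star_dotProduct_self_one_add_smul_vecMulVec_mulVec f hq2, hq1, smul_eq_mul,
    Complex.star_def, Complex.conj_mul']
  rw [← hf, ← Complex.mul_conj' f]
  ring

/-- Norm identity for the collision factor: for unit vectors `q1, q2` and
`w = f₂(k̄₁)(I + (f₂(k̄₁)-1) q2 q2†) q1`, one has
`|w|² = |f₂(k̄₁)|² (1 + ((k2-k̄2)(k̄1-k1)/|k2-k1|²)|q2† q1|²)`. -/
theorem collision_factor_norm {n : ℕ} (k1 k2 : ℂ)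
    (h1 : 0 < k1.im) (h2 : 0 < k2.im) (hne : k1 ≠ k2)
    (q1 q2 : Fin n → ℂ)
    (hq1 : dotProduct (star q1) q1 = 1) (hq2 : dotProduct (star q2) q2 = 1) :
    let f2k1s : ℂ := (starRingEnd ℂ k1 - k2) / (starRingEnd ℂ k1 - starRingEnd ℂ k2)
    let w : Fin n → ℂ := f2k1s •
      (((1 : Matrix (Fin n) (Fin n) ℂ) + (f2k1s - 1) • vecMulVec q2 (star q2)).mulVec q1)
    dotProduct (star w) w
      = ((‖f2k1s‖ : ℂ))^2 *
        (1 + ((k2 - starRingEnd ℂ k2) * (starRingEnd ℂ k1 - k1)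
          / ((‖k2 - k1‖ : ℂ))^2)
          * ((‖dotProduct (star q2) q1‖ : ℂ))^2) :=
  collision_factor_norm_general k1 k2 hne q1 q2 hq1 hq2
end
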